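/- arXiv:1812.06530 — 2 statements merged into one kernel-verified Lean document; each statement's English description precedes it below -/
import Mathlib

section
/- Let p, q be positive integers with d = gcd(p,q) and let ζ be a primitive d-th root of unity. For i ≠ j, the branches f_i = y^{p/d} - ζ^i x^{q/d} and f_j = y^{p/d} - ζ^j x^{q/d} have intersection number (f_i, f_j)_0 = pq/d² at the origin. -/
open PowerSeries

/-! Along `γ_j` both terms become multiples of `t^{(p/d)(q/d)}`, with coefficients `ζ^j` and `ζ^i`;
these differ because `ζ` is primitive and `i, j < d`. -/

namespace PowerSeries

variable {R : Type*} [CommRing R]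

theorem C_mul_X_pow_pow_sub_C_mul_X_pow_pow (a b : R) (m n : ℕ) :
    ((C a * X ^ m) ^ n - C b * (X ^ n) ^ m : R⟦X⟧) = monomial (n * m) (a ^ n - b) := by
  rw [mul_pow, ← map_pow, ← pow_mul, ← pow_mul, mul_comm m n, X_pow_eq, ← smul_eq_C_mul,
    ← smul_eq_C_mul, ← map_smul, ← map_smul, smul_eq_mul, smul_eq_mul, mul_one, mul_one,
    map_sub]

theorem order_C_mul_X_pow_pow_sub_C_mul_X_pow_pow {a b : R} {n : ℕ} (h : a ^ n ≠ b) (m : ℕ) :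
    ((C a * X ^ m) ^ n - C b * (X ^ n) ^ m : R⟦X⟧).order = (n * m : ℕ) := by
  rw [C_mul_X_pow_pow_sub_C_mul_X_pow_pow, order_monomial_of_ne_zero _ _ (sub_ne_zero.mpr h)]

end PowerSeries

theorem stmt1_general (p q d : ℕ) (hd : d = Nat.gcd p q)
    (ζ : ℂ) (hζ : IsPrimitiveRoot ζ d) (i j : ℕ) (hi : i < d) (hj : j < d) (hij : i ≠ j)
    (A : ℂ) (hA : A ^ (p / d) = ζ ^ j) :
    ((C A * X ^ (q / d)) ^ (p / d)
        - C (ζ ^ i) * (X ^ (p / d)) ^ (q / d) : PowerSeries ℂ).order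
      = (p * q / (d * d) : ℕ) := by
  have hA_ne : A ^ (p / d) ≠ ζ ^ i := hA ▸ fun h => hij (hζ.pow_inj hj hi h).symm
  rw [order_C_mul_X_pow_pow_sub_C_mul_X_pow_pow hA_ne,
    Nat.div_mul_div_comm (hd ▸ Nat.gcd_dvd_left p q) (hd ▸ Nat.gcd_dvd_right p q)]

/-- For `p, q` positive, `d = gcd p q`, `ζ` a primitive `d`-th root of unity and
`i ≠ j`, the intersection number of the branches `f_i = y^{p/d} - ζ^i x^{q/d}` and
`f_j = y^{p/d} - ζ^j x^{q/d}` at the origin, computed as the `t`-order of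
`f_i(γ_j(t))` for the parameterization `γ_j(t) = (t^{p/d}, A t^{q/d})` with
`A^{p/d} = ζ^j`, equals `pq/d²`. -/
theorem stmt1 (p q d : ℕ) (hp : 0 < p) (hq : 0 < q) (hd : d = Nat.gcd p q)
    (ζ : ℂ) (hζ : IsPrimitiveRoot ζ d) (i j : ℕ) (hi : i < d) (hj : j < d) (hij : i ≠ j)
    (A : ℂ) (hA : A ^ (p / d) = ζ ^ j) :
    ((C A * X ^ (q / d)) ^ (p / d)
        - C (ζ ^ i) * (X ^ (p / d)) ^ (q / d) : PowerSeries ℂ).order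
      = (p * q / (d * d) : ℕ) :=
  stmt1_general p q d hd ζ hζ i j hi hj hij A hA
end

section
/- Let p, q be positive integers, d = gcd(p,q), m, n positive integers with mp - nq = d, and ω = (-q x^{q-1} - q y Δ) dx + (p y^{p-1} + p x Δ) dy with Δ = Σ a_{ij} x^i y^j. Under E(u,v) = (u^n v^{p/d}, u^m v^{q/d}), the pullback satisfies E*ω / (u^{nq-1} v^{pq/d - 1}) = v(-qn + mp u^d + D̃(u,v)) du + (pq/d) u (u^d - 1) dv, where D̃(u,v) = d Σ_{i,j} a_{ij} u^{ni + mj + m + n - nq} v^{(pi + qj + p + q - pq)/d}. -/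
open MvPowerSeries

/-- `E^*(Δ) = Σ a_{ij} u^{ni+mj} v^{(pi+qj)/d}`, the pullback of
`Δ(x,y) = Σ a_{ij} x^i y^j` under `E(u,v) = (u^n v^{p/d}, u^m v^{q/d})`
(meaningful for `m, n ≥ 1` and `d ∣ p`, `d ∣ q`). -/
noncomputable def pullD (Δ : MvPowerSeries (Fin 2) ℂ) (n m p q d : ℕ) :
    MvPowerSeries (Fin 2) ℂ :=
  fun e =>
    ∑ ij ∈ (Finset.range (e 0 + 1) ×ˢ Finset.range (e 0 + 1)).filter
        (fun ij => n * ij.1 + m * ij.2 = e 0 ∧ p * ij.1 + q * ij.2 = d * e 1),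
      MvPowerSeries.coeff (R := ℂ) (Finsupp.single 0 ij.1 + Finsupp.single 1 ij.2) Δ

/-- `D̃(u,v) = d Σ a_{ij} u^{ni+mj+m+n-nq} v^{(pi+qj+p+q-pq)/d}`. -/
noncomputable def tildeD (Δ : MvPowerSeries (Fin 2) ℂ) (n m p q d : ℕ) :
    MvPowerSeries (Fin 2) ℂ :=
  fun e =>
    (d : ℂ) * ∑ ij ∈ (Finset.range (e 0 + n * q + 1) ×ˢ Finset.range (e 0 + n * q + 1)).filter
        (fun ij => n * ij.1 + m * ij.2 + m + n = e 0 + n * q ∧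
          p * ij.1 + q * ij.2 + p + q = d * e 1 + p * q),
      MvPowerSeries.coeff (R := ℂ) (Finsupp.single 0 ij.1 + Finsupp.single 1 ij.2) Δ

/-!
Write `E_x = u^n v^a`, `E_y = u^m v^b` with `a = p/d`, `b = q/d`. Since `mp = nq + d` and
`bp = aq`, the cusp pulls back to `E_y^p = u^d E_x^q`. The Euler relations `u ∂_u E_x = n E_x`,
`v ∂_v E_x = a E_x` (and likewise for `E_y`) turn `u · (du-coefficient)` and
`v · (dv-coefficient)` into combinations of `E_x^q`, `E_y^p` and `E_x E_y E^*Δ`, the last with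
coefficient `mp - nq = d`, resp. `pb - qa = 0`. What remains is `d E_x E_y E^*Δ = E_x^q D̃`, a
comparison of coefficients: both sides collect the `a_ij` with `n(i+1) + m(j+1)` and
`p(i+1) + q(j+1)` prescribed, and the order condition on `Δ` kills the terms that `D̃` would put
at negative exponents. Finally `u`, resp. `v`, is cancelled in the domain of power series.
-/

section CuspPullback

variable {R : Type*} [CommRing R] [NoZeroDivisors R] {u v P T : R} {n m p q d a b : ℕ}

theorem pullback_du (hu : u ≠ 0) (hn : n ≠ 0) (hm : m ≠ 0) (hp : p ≠ 0) (hq : q ≠ 0)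
    (ha : a ≠ 0) (hmn : m * p = n * q + d)
    (hcusp : (u ^ m * v ^ b) ^ p = u ^ d * (u ^ n * v ^ a) ^ q)
    (hkey : (d : R) * (u ^ n * v ^ a * (u ^ m * v ^ b) * P) = (u ^ n * v ^ a) ^ q * T) :
    (-(q : R) * (u ^ n * v ^ a) ^ (q - 1) - q * (u ^ m * v ^ b) * P) * (n * u ^ (n - 1) * v ^ a)
      + (p * (u ^ m * v ^ b) ^ (p - 1) + p * (u ^ n * v ^ a) * P) * (m * u ^ (m - 1) * v ^ b)
      = u ^ (n * q - 1) * v ^ (a * q - 1) * (v * (-(q * n) + m * p * u ^ d + T)) := by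
  refine mul_right_cancel₀ hu ?_
  have hmn' : (m : R) * p = n * q + d := by exact_mod_cast congrArg (Nat.cast : ℕ → R) hmn
  have hu' : u ^ (n * q - 1) * u = u ^ (n * q) := pow_sub_one_mul (mul_ne_zero hn hq) u
  have hv' : v ^ (a * q - 1) * v = v ^ (a * q) := pow_sub_one_mul (mul_ne_zero ha hq) v
  linear_combination
    (-(q : R) * (u ^ n * v ^ a) ^ (q - 1) - q * (u ^ m * v ^ b) * P) * n * v ^ a
        * pow_sub_one_mul hn u
      + (p * (u ^ m * v ^ b) ^ (p - 1) + p * (u ^ n * v ^ a) * P) * m * v ^ b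
        * pow_sub_one_mul hm u
      - q * n * pow_sub_one_mul hq (u ^ n * v ^ a)
      + p * m * pow_sub_one_mul hp (u ^ m * v ^ b)
      + p * m * hcusp + u ^ n * v ^ a * (u ^ m * v ^ b) * P * hmn' + hkey
      - (-(q * n) + m * p * u ^ d + T) * (v ^ (a * q - 1) * v * hu' + u ^ (n * q) * hv')

theorem pullback_dv (hv : v ≠ 0) (hn : n ≠ 0) (hp : p ≠ 0) (hq : q ≠ 0) (ha : a ≠ 0)
    (hb : b ≠ 0) (hab : b * p = a * q)
    (hcusp : (u ^ m * v ^ b) ^ p = u ^ d * (u ^ n * v ^ a) ^ q) :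
    (-(q : R) * (u ^ n * v ^ a) ^ (q - 1) - q * (u ^ m * v ^ b) * P) * (a * u ^ n * v ^ (a - 1))
      + (p * (u ^ m * v ^ b) ^ (p - 1) + p * (u ^ n * v ^ a) * P) * (b * u ^ m * v ^ (b - 1))
      = u ^ (n * q - 1) * v ^ (a * q - 1) * (a * q * u * (u ^ d - 1)) := by
  refine mul_right_cancel₀ hv ?_
  have hab' : (b : R) * p = a * q := by exact_mod_cast congrArg (Nat.cast : ℕ → R) hab
  have hu' : u ^ (n * q - 1) * u = u ^ (n * q) := pow_sub_one_mul (mul_ne_zero hn hq) u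
  have hv' : v ^ (a * q - 1) * v = v ^ (a * q) := pow_sub_one_mul (mul_ne_zero ha hq) v
  linear_combination
    (-(q : R) * (u ^ n * v ^ a) ^ (q - 1) - q * (u ^ m * v ^ b) * P) * a * u ^ n
        * pow_sub_one_mul ha v
      + (p * (u ^ m * v ^ b) ^ (p - 1) + p * (u ^ n * v ^ a) * P) * b * u ^ m
        * pow_sub_one_mul hb v
      - q * a * pow_sub_one_mul hq (u ^ n * v ^ a)
      + p * b * pow_sub_one_mul hp (u ^ m * v ^ b)
      + p * b * hcusp + (u ^ n * v ^ a * (u ^ m * v ^ b) * P + u ^ d * (u ^ n * v ^ a) ^ q) * hab'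
      - a * q * (u ^ d - 1) * (u ^ (n * q - 1) * u * hv' + v ^ (a * q) * hu')

end CuspPullback

theorem Finset.sum_filter_range_product_congr {M : Type*} [AddCommMonoid M] {f : ℕ × ℕ → M}
    {P Q : ℕ × ℕ → Prop} [DecidablePred P] [DecidablePred Q] {N N' : ℕ}
    (hPQ : ∀ ij, P ij ↔ Q ij) (hN : ∀ ij, P ij → ij.1 < N ∧ ij.2 < N)
    (hN' : ∀ ij, Q ij → ij.1 < N' ∧ ij.2 < N') :
    ∑ ij ∈ (range N ×ˢ range N).filter P, f ij = ∑ ij ∈ (range N' ×ˢ range N').filter Q, f ij := by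
  refine Finset.sum_congr (Finset.ext fun ij => ?_) fun _ _ => rfl
  simp only [mem_filter, mem_product, mem_range]
  have := hN ij
  have := hN' ij
  have := hPQ ij
  tauto

theorem Finsupp.single_zero_add_single_one_le_iff {i j : ℕ} {e : Fin 2 →₀ ℕ} :
    single 0 i + single 1 j ≤ e ↔ i ≤ e 0 ∧ j ≤ e 1 := by
  simp [le_def, Fin.forall_fin_two]

namespace MvPowerSeries

variable {R : Type*} [Semiring R]

theorem X_ne_zero {σ : Type*} [Nontrivial R] (s : σ) : (X s : MvPowerSeries σ R) ≠ 0 :=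
  fun h => by simpa using congrArg (coeff (Finsupp.single s 1)) h

theorem X_zero_pow_mul_X_one_pow (i j : ℕ) :
    (X 0 ^ i * X 1 ^ j : MvPowerSeries (Fin 2) R)
      = monomial (Finsupp.single 0 i + Finsupp.single 1 j) 1 := by
  rw [X_pow_eq, X_pow_eq, monomial_mul_monomial, one_mul]

end MvPowerSeries

open Finset MvPowerSeries

/-- The coefficient of `u ^ A * v ^ (B / d)` in the pullback `E^*(x y Δ)`. -/
noncomputable def weightedCoeff (Δ : MvPowerSeries (Fin 2) ℂ) (n m p q A B : ℕ) : ℂ :=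
  ∑ ij ∈ (range A ×ˢ range A).filter
      (fun ij => n * ij.1 + m * ij.2 + m + n = A ∧ p * ij.1 + q * ij.2 + p + q = B),
    coeff (Finsupp.single 0 ij.1 + Finsupp.single 1 ij.2) Δ

section WeightedCoeff

variable {Δ : MvPowerSeries (Fin 2) ℂ} {n m p q d a b : ℕ}

theorem weightedCoeff_eq_zero {α β A B : ℕ}
    (hΔ : ∀ i j : ℕ, coeff (Finsupp.single 0 i + Finsupp.single 1 j) Δ ≠ 0 →
      β ≤ p * i + q * j + p + q ∧ α ≤ n * i + m * j + m + n)
    (hAB : A < α ∨ B < β) : weightedCoeff Δ n m p q A B = 0 := by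
  refine sum_eq_zero fun ij hij => not_not.mp fun hne => ?_
  obtain ⟨-, hA, hB⟩ := mem_filter.mp hij
  have := hΔ ij.1 ij.2 hne
  omega

theorem coeff_mul_pullD (hn : 0 < n) (hm : 0 < m) (hd : 0 < d) (hpa : p = d * a)
    (hqb : q = d * b) (e : Fin 2 →₀ ℕ) :
    coeff e (X 0 ^ (n + m) * X 1 ^ (a + b) * pullD Δ n m p q d)
      = weightedCoeff Δ n m p q (e 0) (d * e 1) := by
  have hpq : d * (a + b) = p + q := by rw [hpa, hqb, mul_add]
  rw [X_zero_pow_mul_X_one_pow, coeff_monomial_mul, one_mul]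
  split_ifs with hle
  · rw [Finsupp.single_zero_add_single_one_le_iff] at hle
    have hsub : d * (e 1 - (a + b)) + (p + q) = d * e 1 := by
      rw [← hpq, ← mul_add, Nat.sub_add_cancel hle.2]
    rw [coeff_apply, pullD]
    simp only [Finsupp.coe_tsub, Finsupp.coe_add, Pi.sub_apply, Pi.add_apply,
      Finsupp.single_eq_same, Finsupp.single_eq_of_ne zero_ne_one,
      Finsupp.single_eq_of_ne one_ne_zero, add_zero, zero_add]
    refine sum_filter_range_product_congr (fun ij => ?_) (fun ij h => ?_) (fun ij h => ?_)
    · omega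
    all_goals
      have := Nat.le_mul_of_pos_left ij.1 hn
      have := Nat.le_mul_of_pos_left ij.2 hm
      omega
  · rw [Finsupp.single_zero_add_single_one_le_iff, not_and_or, not_le, not_le] at hle
    refine (weightedCoeff_eq_zero (α := n + m) (β := p + q)
      (fun _ _ _ => ⟨by omega, by omega⟩) (hle.imp_right fun h => ?_)).symm
    rw [← hpq]
    exact Nat.mul_lt_mul_of_pos_left h hd

theorem coeff_mul_tildeD (hn : 0 < n) (hm : 0 < m) (hd : 0 < d) (hpa : p = d * a)
    (hΔ : ∀ i j : ℕ, coeff (Finsupp.single 0 i + Finsupp.single 1 j) Δ ≠ 0 →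
      p * q ≤ p * i + q * j + p + q ∧ n * q ≤ n * i + m * j + m + n)
    (e : Fin 2 →₀ ℕ) :
    coeff e (X 0 ^ (n * q) * X 1 ^ (a * q) * tildeD Δ n m p q d)
      = d * weightedCoeff Δ n m p q (e 0) (d * e 1) := by
  have hpq : d * (a * q) = p * q := by rw [hpa, mul_assoc]
  rw [X_zero_pow_mul_X_one_pow, coeff_monomial_mul, one_mul]
  split_ifs with hle
  · rw [Finsupp.single_zero_add_single_one_le_iff] at hle
    have hsub : d * (e 1 - a * q) + p * q = d * e 1 := by
      rw [← hpq, ← mul_add, Nat.sub_add_cancel hle.2]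
    rw [coeff_apply, tildeD]
    simp only [Finsupp.coe_tsub, Finsupp.coe_add, Pi.sub_apply, Pi.add_apply,
      Finsupp.single_eq_same, Finsupp.single_eq_of_ne zero_ne_one,
      Finsupp.single_eq_of_ne one_ne_zero, add_zero, zero_add]
    congr 1
    refine sum_filter_range_product_congr (fun ij => ?_) (fun ij h => ?_) (fun ij h => ?_)
    · omega
    all_goals
      have := Nat.le_mul_of_pos_left ij.1 hn
      have := Nat.le_mul_of_pos_left ij.2 hm
      omega
  · rw [Finsupp.single_zero_add_single_one_le_iff, not_and_or, not_le, not_le] at hle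
    rw [weightedCoeff_eq_zero hΔ (hle.imp_right fun h => ?_), mul_zero]
    rw [← hpq]
    exact Nat.mul_lt_mul_of_pos_left h hd

theorem natCast_mul_pullD_eq_tildeD (hn : 0 < n) (hm : 0 < m) (hd : 0 < d) (hpa : p = d * a)
    (hqb : q = d * b)
    (hΔ : ∀ i j : ℕ, coeff (Finsupp.single 0 i + Finsupp.single 1 j) Δ ≠ 0 →
      p * q ≤ p * i + q * j + p + q ∧ n * q ≤ n * i + m * j + m + n) :
    (d : MvPowerSeries (Fin 2) ℂ) * (X 0 ^ (n + m) * X 1 ^ (a + b) * pullD Δ n m p q d)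
      = X 0 ^ (n * q) * X 1 ^ (a * q) * tildeD Δ n m p q d := by
  ext e
  rw [← nsmul_eq_mul, map_nsmul, nsmul_eq_mul, coeff_mul_pullD hn hm hd hpa hqb,
    coeff_mul_tildeD hn hm hd hpa hΔ]

end WeightedCoeff

/-- Let `p, q, m, n` be positive integers, `d = gcd(p,q)`, `mp - nq = d`, and consider the
cuspidal 1-form `ω = (-q x^{q-1} - q y Δ) dx + (p y^{p-1} + p x Δ) dy` with
`(Δ, y^p - x^q)₀ ≥ pq - p - q`. Under `E(u,v) = (u^n v^{p/d}, u^m v^{q/d})` the pullback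
`E^*ω = A(E) dE_x + B(E) dE_y` satisfies
`E^*ω / (u^{nq-1} v^{pq/d-1}) = v(-qn + mp u^d + D̃(u,v)) du + (pq/d) u (u^d - 1) dv`,
stated as the two identities of the `du`- and `dv`-coefficients. Here `u = X 0`, `v = X 1`. -/
theorem stmt12 (p q d m n : ℕ) (hp : 0 < p) (hq : 0 < q) (hm : 0 < m) (hn : 0 < n)
    (hd : d = Nat.gcd p q) (hmn : m * p = n * q + d)
    (Δ : MvPowerSeries (Fin 2) ℂ)
    (hΔ : ∀ i j : ℕ,
      MvPowerSeries.coeff (R := ℂ) (Finsupp.single 0 i + Finsupp.single 1 j) Δ ≠ 0 →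
      p * q ≤ p * i + q * j + p + q ∧ n * q ≤ n * i + m * j + m + n) :
    ((-(C (σ := Fin 2) (R := ℂ) (q : ℂ)) * ((X 0 : MvPowerSeries (Fin 2) ℂ) ^ n * (X 1) ^ (p / d)) ^ (q - 1)
        - C (σ := Fin 2) (R := ℂ) (q : ℂ) * ((X 0) ^ m * (X 1) ^ (q / d)) * pullD Δ n m p q d)
          * (C (σ := Fin 2) (R := ℂ) (n : ℂ) * (X 0) ^ (n - 1) * (X 1) ^ (p / d))
      + (C (σ := Fin 2) (R := ℂ) (p : ℂ) * ((X 0 : MvPowerSeries (Fin 2) ℂ) ^ m * (X 1) ^ (q / d)) ^ (p - 1)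
          + C (σ := Fin 2) (R := ℂ) (p : ℂ) * ((X 0) ^ n * (X 1) ^ (p / d)) * pullD Δ n m p q d)
          * (C (σ := Fin 2) (R := ℂ) (m : ℂ) * (X 0) ^ (m - 1) * (X 1) ^ (q / d))
      = (X 0) ^ (n * q - 1) * (X 1) ^ (p * q / d - 1) *
          ((X 1) * (-(C (σ := Fin 2) (R := ℂ) ((q * n : ℕ) : ℂ)) + C (σ := Fin 2) (R := ℂ) ((m * p : ℕ) : ℂ) * (X 0) ^ d
            + tildeD Δ n m p q d)))
    ∧
    ((-(C (σ := Fin 2) (R := ℂ) (q : ℂ)) * ((X 0 : MvPowerSeries (Fin 2) ℂ) ^ n * (X 1) ^ (p / d)) ^ (q - 1)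
        - C (σ := Fin 2) (R := ℂ) (q : ℂ) * ((X 0) ^ m * (X 1) ^ (q / d)) * pullD Δ n m p q d)
          * (C (σ := Fin 2) (R := ℂ) ((p / d : ℕ) : ℂ) * (X 0) ^ n * (X 1) ^ (p / d - 1))
      + (C (σ := Fin 2) (R := ℂ) (p : ℂ) * ((X 0 : MvPowerSeries (Fin 2) ℂ) ^ m * (X 1) ^ (q / d)) ^ (p - 1)
          + C (σ := Fin 2) (R := ℂ) (p : ℂ) * ((X 0) ^ n * (X 1) ^ (p / d)) * pullD Δ n m p q d)
          * (C (σ := Fin 2) (R := ℂ) ((q / d : ℕ) : ℂ) * (X 0) ^ m * (X 1) ^ (q / d - 1))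
      = (X 0) ^ (n * q - 1) * (X 1) ^ (p * q / d - 1) *
          (C (σ := Fin 2) (R := ℂ) ((p * q / d : ℕ) : ℂ) * (X 0) * ((X 0) ^ d - 1))) := by
  obtain ⟨a, hpa⟩ : d ∣ p := hd ▸ Nat.gcd_dvd_left p q
  obtain ⟨b, hqb⟩ : d ∣ q := hd ▸ Nat.gcd_dvd_right p q
  have hd0 : 0 < d := hd ▸ Nat.gcd_pos_of_pos_left q hp
  have ha : a ≠ 0 := by rintro rfl; omega
  have hb : b ≠ 0 := by rintro rfl; omega
  have hpd : p / d = a := by rw [hpa, Nat.mul_div_cancel_left _ hd0]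
  have hqd : q / d = b := by rw [hqb, Nat.mul_div_cancel_left _ hd0]
  have hpqd : p * q / d = a * q := by rw [hpa, mul_assoc, Nat.mul_div_cancel_left _ hd0]
  have hab : b * p = a * q := by rw [hpa, hqb]; ring
  have hcusp : ((X 0 : MvPowerSeries (Fin 2) ℂ) ^ m * X 1 ^ b) ^ p
      = X 0 ^ d * (X 0 ^ n * X 1 ^ a) ^ q := by
    rw [mul_pow, mul_pow, ← pow_mul, ← pow_mul, ← pow_mul, ← pow_mul, hmn, hab, pow_add]
    ring
  have hkey := natCast_mul_pullD_eq_tildeD hn hm hd0 hpa hqb hΔ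
  rw [hpd, hqd, hpqd]
  simp only [map_natCast]
  push_cast
  exact ⟨pullback_du (X_ne_zero 0) hn.ne' hm.ne' hp.ne' hq.ne' ha hmn hcusp
      (by linear_combination hkey),
    pullback_dv (X_ne_zero 1) hn.ne' hp.ne' hq.ne' ha hb hab hcusp⟩
end
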